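/- arXiv:1801.07761 — 4 statements merged into one kernel-verified Lean document; each statement's English description precedes it below -/
import Mathlib

section
/- If Γ = (z_m) is a uniformly discrete sequence in the unit disc with separation constant δ (i.e. the pseudohyperbolic distance ρ(z_n,z_m) ≥ δ for all n ≠ m), then ∑_{m=1}^∞ (1-|z_m|^2)^2 ≤ 4/δ^2. -/
/-!
Since `|1 - w̄ z| ≥ 1 - |z| |w| ≥ ((1 - |z|²) + (1 - |w|²)) / 2`, the separation `ρ(z, w) ≥ δ`
forces `|z - w| ≥ r(z) + r(w)` with `r(z) = δ (1 - |z|²) / 2`. Hence the Euclidean discs of radius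
`r(z_m)` about `z_m` are pairwise disjoint, and (as `δ < 1`) they lie in the unit disc; comparing
areas gives `∑ r(z_m)² ≤ 1`.
-/

open MeasureTheory Complex
open Metric Function
open scoped ComplexConjugate

noncomputable section

/-- Pseudohyperbolic distance on the unit disc. -/
def pd (z w : ℂ) : ℝ := ‖z - w‖ / ‖1 - (starRingEnd ℂ) w * z‖

lemma sq_norm_one_sub_conj_mul_sub_sq_norm_sub (z w : ℂ) :
    ‖1 - conj w * z‖ ^ 2 - ‖z - w‖ ^ 2 = (1 - ‖z‖ ^ 2) * (1 - ‖w‖ ^ 2) := by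
  simp only [Complex.sq_norm, normSq_apply, sub_re, sub_im, mul_re, mul_im, one_re, one_im,
    conj_re, conj_im]
  ring

lemma pd_lt_one {z w : ℂ} (hz : ‖z‖ < 1) (hw : ‖w‖ < 1) : pd z w < 1 := by
  have hprod : 0 < (1 - ‖z‖ ^ 2) * (1 - ‖w‖ ^ 2) := by
    apply mul_pos <;> nlinarith [norm_nonneg z, norm_nonneg w]
  have hsq : ‖z - w‖ ^ 2 < ‖1 - conj w * z‖ ^ 2 := by
    linarith [sq_norm_one_sub_conj_mul_sub_sq_norm_sub z w]
  have hlt := (pow_lt_pow_iff_left₀ (norm_nonneg _) (norm_nonneg _) two_ne_zero).mp hsq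
  exact (div_lt_one ((norm_nonneg _).trans_lt hlt)).mpr hlt

lemma one_sub_norm_mul_norm_le (z w : ℂ) : 1 - ‖w‖ * ‖z‖ ≤ ‖1 - conj w * z‖ := by
  simpa [norm_mul] using norm_sub_norm_le (1 : ℂ) (conj w * z)

def separationRadius (δ : ℝ) (z : ℂ) : ℝ := δ / 2 * (1 - ‖z‖ ^ 2)

lemma separationRadius_nonneg {δ : ℝ} {z : ℂ} (hδ : 0 ≤ δ) (hz : ‖z‖ ≤ 1) :
    0 ≤ separationRadius δ z :=
  mul_nonneg (by positivity) (by nlinarith [norm_nonneg z])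

lemma separationRadius_add_le_norm_sub {δ : ℝ} {z w : ℂ} (hδ : 0 ≤ δ) (hz : ‖z‖ < 1)
    (hw : ‖w‖ < 1) (h : δ ≤ pd z w) :
    separationRadius δ z + separationRadius δ w ≤ ‖z - w‖ := by
  have hpos : 0 < ‖1 - conj w * z‖ :=
    lt_of_lt_of_le (by nlinarith [norm_nonneg z, norm_nonneg w]) (one_sub_norm_mul_norm_le z w)
  have hδpd : δ * ‖1 - conj w * z‖ ≤ ‖z - w‖ := (le_div_iff₀ hpos).mp h
  have hmean : (1 - ‖z‖ ^ 2) / 2 + (1 - ‖w‖ ^ 2) / 2 ≤ ‖1 - conj w * z‖ := by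
    nlinarith [sq_nonneg (‖z‖ - ‖w‖), one_sub_norm_mul_norm_le z w]
  unfold separationRadius
  nlinarith [mul_le_mul_of_nonneg_left hmean hδ]

lemma ball_separationRadius_subset {δ : ℝ} {z : ℂ} (hδ : δ ≤ 1) (hz : ‖z‖ < 1) :
    ball z (separationRadius δ z) ⊆ ball 0 1 := by
  apply ball_subset_ball'
  rw [dist_zero_right, separationRadius]
  have hz0 := norm_nonneg z
  nlinarith [mul_nonneg (sub_nonneg.mpr hz.le) (sub_nonneg.mpr hδ)]

lemma tsum_ofReal_sq_le_of_pairwise_disjoint_ball {ι : Type*} {c : ι → ℂ} {r : ι → ℝ} {a : ℂ}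
    {R : ℝ} (hdisj : Pairwise (Disjoint on fun i ↦ ball (c i) (r i)))
    (hsub : ∀ i, ball (c i) (r i) ⊆ ball a R) :
    ∑' i, ENNReal.ofReal (r i) ^ 2 ≤ ENNReal.ofReal R ^ 2 := by
  have harea : ∑' i, volume (ball (c i) (r i)) ≤ volume (ball a R) :=
    (tsum_meas_le_meas_iUnion_of_disjoint volume (fun _ ↦ measurableSet_ball) hdisj).trans
      (measure_mono (Set.iUnion_subset hsub))
  simp only [Complex.volume_ball, ENNReal.tsum_mul_right] at harea
  exact (ENNReal.mul_le_mul_iff_left (by simp [NNReal.pi_ne_zero]) ENNReal.coe_ne_top).mp harea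

theorem stmt1 (z : ℕ → ℂ) (hz : ∀ m, z m ∈ Metric.ball (0:ℂ) 1)
    (δ : ℝ) (hδ : 0 < δ) (hsep : ∀ n m, n ≠ m → δ ≤ pd (z n) (z m)) :
    ∑' m : ℕ, ENNReal.ofReal ((1 - ‖z m‖ ^ 2) ^ 2) ≤ ENNReal.ofReal (4 / δ ^ 2) := by
  have hz1 : ∀ m, ‖z m‖ < 1 := fun m ↦ mem_ball_zero_iff.mp (hz m)
  have hδ1 : δ ≤ 1 := (hsep 0 1 zero_ne_one).trans (pd_lt_one (hz1 0) (hz1 1)).le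
  have hdisj : Pairwise (Disjoint on fun m ↦ ball (z m) (separationRadius δ (z m))) :=
    fun n m hnm ↦ ball_disjoint_ball <| by
      rw [dist_eq]
      exact separationRadius_add_le_norm_sub hδ.le (hz1 n) (hz1 m) (hsep n m hnm)
  have harea := tsum_ofReal_sq_le_of_pairwise_disjoint_ball hdisj
    fun m ↦ ball_separationRadius_subset hδ1 (hz1 m)
  have hterm : ∀ m, ENNReal.ofReal ((1 - ‖z m‖ ^ 2) ^ 2)
      = ENNReal.ofReal (4 / δ ^ 2) * ENNReal.ofReal (separationRadius δ (z m)) ^ 2 := by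
    intro m
    rw [← ENNReal.ofReal_pow (separationRadius_nonneg hδ.le (hz1 m).le),
      ← ENNReal.ofReal_mul (by positivity), separationRadius]
    congr 1
    field_simp
    ring
  calc ∑' m, ENNReal.ofReal ((1 - ‖z m‖ ^ 2) ^ 2)
      = ENNReal.ofReal (4 / δ ^ 2) * ∑' m, ENNReal.ofReal (separationRadius δ (z m)) ^ 2 := by
        simp only [hterm, ENNReal.tsum_mul_left]
    _ ≤ ENNReal.ofReal (4 / δ ^ 2) * ENNReal.ofReal 1 ^ 2 := by gcongr
    _ = ENNReal.ofReal (4 / δ ^ 2) := by simp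
end
end

section
/- If Γ is uniformly discrete with separation constant δ, then for every z in the unit disc and every 0<r<1, the number n(Γ,z,r) of points of Γ in the pseudohyperbolic disc E(z,r) satisfies n(Γ,z,r) ≤ (2/δ + 1)^2 · 1/(1-r^2). -/
open MeasureTheory Complex

noncomputable section

/-!
Put `t = δ / 2`. The pseudohyperbolic discs `E(γ, t)` about the points `γ ∈ Γ ∩ E(z, r)` are
pairwise disjoint and contained in `E(z, R)`, `R = (r + t) / (1 + r t)`; both facts come from the
strong triangle inequality `ρ(u, v) ≤ (ρ(u, w) + ρ(w, v)) / (1 + ρ(u, w) ρ(w, v))`, which is the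
Möbius-invariant form of `|1 - v̄ u| ≤ 1 + |u| |v|`. The hyperbolic area `dA / (1 - |ζ|²)²` is
invariant under the disc automorphisms `ζ ↦ (a - ζ) / (1 - ā ζ)`, so every `E(a, s)` has area
`π s² / (1 - s²)`. Comparing areas gives `n · t² / (1 - t²) ≤ (r + t)² / ((1 - r²)(1 - t²))`,
that is `n ≤ ((r + t) / t)² / (1 - r²) ≤ (2 / δ + 1)² / (1 - r²)`.
-/

open Set Metric
open scoped ComplexConjugate ENNReal

theorem MeasureTheory.finite_and_ncard_mul_le_of_pairwiseDisjoint {ι α : Type*}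
    [MeasurableSpace α] (μ : Measure α) {S : Set ι} {E : ι → Set α} {F : Set α} {ε : ℝ≥0∞}
    (hε : ε ≠ 0) (hF : μ F ≠ ∞) (hE : ∀ i ∈ S, MeasurableSet (E i))
    (hdisj : S.PairwiseDisjoint E) (hEF : ∀ i ∈ S, E i ⊆ F) (hεE : ∀ i ∈ S, ε ≤ μ (E i)) :
    S.Finite ∧ S.ncard * ε ≤ μ F := by
  have hcard : ∀ T : Finset ι, ↑T ⊆ S → T.card * ε ≤ μ F := by
    intro T hT
    calc (T.card : ℝ≥0∞) * ε = ∑ i ∈ T, ε := by rw [Finset.sum_const, nsmul_eq_mul]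
      _ ≤ ∑ i ∈ T, μ (E i) := Finset.sum_le_sum fun i hi => hεE i (hT hi)
      _ = μ (⋃ i ∈ T, E i) :=
        (measure_biUnion_finset (hdisj.subset hT) fun i hi => hE i (hT hi)).symm
      _ ≤ μ F := measure_mono (iUnion₂_subset fun i hi => hEF i (hT hi))
  have hfin : S.Finite := by
    by_contra hinf
    obtain ⟨n, hn⟩ := ENNReal.exists_nat_mul_gt hε hF
    obtain ⟨T, hT, rfl⟩ := Set.Infinite.exists_subset_card_eq hinf n
    exact (hcard T hT).not_gt hn
  refine ⟨hfin, ?_⟩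
  rw [ncard_eq_toFinset_card S hfin]
  exact hcard _ (by simp)

def mobius (a ζ : ℂ) : ℂ := (a - ζ) / (1 - conj a * ζ)

section Mobius

variable {a z : ℂ}

lemma one_sub_conj_mul_ne_zero (ha : ‖a‖ < 1) (hz : ‖z‖ < 1) : 1 - conj a * z ≠ 0 := by
  intro h
  have hlt : ‖conj a * z‖ < 1 := by
    rw [norm_mul, Complex.norm_conj]
    exact mul_lt_one_of_nonneg_of_lt_one_left (norm_nonneg a) ha hz.le
  rw [← sub_eq_zero.mp h, norm_one] at hlt
  exact lt_irrefl 1 hlt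

lemma one_sub_normSq_mobius (h : 1 - conj a * z ≠ 0) :
    1 - normSq (mobius a z) = (1 - normSq a) * (1 - normSq z) / normSq (1 - conj a * z) := by
  have hpos : normSq (1 - conj a * z) ≠ 0 := normSq_eq_zero.not.mpr h
  rw [mobius, normSq_div, eq_div_iff hpos, sub_mul, div_mul_cancel₀ _ hpos]
  simp only [normSq_apply, sub_re, sub_im, mul_re, mul_im, one_re, one_im, conj_re, conj_im]
  ring

lemma normSq_lt_one_of_norm_lt_one (hz : ‖z‖ < 1) : normSq z < 1 := by
  rw [← Complex.sq_norm]
  exact pow_lt_one₀ (norm_nonneg z) hz two_ne_zero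

lemma norm_mobius_lt_one (ha : ‖a‖ < 1) (hz : ‖z‖ < 1) : ‖mobius a z‖ < 1 := by
  have hd := one_sub_conj_mul_ne_zero ha hz
  have hpos : 0 < 1 - normSq (mobius a z) := by
    rw [one_sub_normSq_mobius hd]
    have := normSq_pos.mpr hd
    have := normSq_lt_one_of_norm_lt_one ha
    have := normSq_lt_one_of_norm_lt_one hz
    positivity
  rw [← Complex.sq_norm] at hpos
  nlinarith [norm_nonneg (mobius a z)]

lemma mobius_mobius (ha : ‖a‖ < 1) (hz : ‖z‖ < 1) : mobius a (mobius a z) = z := by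
  have hd := one_sub_conj_mul_ne_zero ha hz
  have hnum : a - mobius a z = z * (1 - conj a * a) / (1 - conj a * z) := by
    rw [mobius, eq_div_iff hd, sub_mul, div_mul_cancel₀ _ hd]; ring
  have hden : 1 - conj a * mobius a z = (1 - conj a * a) / (1 - conj a * z) := by
    rw [mobius, eq_div_iff hd, sub_mul, mul_assoc, div_mul_cancel₀ _ hd]; ring
  rw [mobius, hnum, hden, div_div_div_cancel_right₀ hd,
    mul_div_cancel_right₀ _ (one_sub_conj_mul_ne_zero ha ha)]

lemma injOn_mobius (ha : ‖a‖ < 1) : InjOn (mobius a) (ball 0 1) := by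
  intro x hx y hy hxy
  rw [mem_ball_zero_iff] at hx hy
  rw [← mobius_mobius ha hx, hxy, mobius_mobius ha hy]

lemma hasDerivAt_mobius (h : 1 - conj a * z ≠ 0) :
    HasDerivAt (mobius a) ((conj a * a - 1) / (1 - conj a * z) ^ 2) z := by
  have hnum : HasDerivAt (fun ζ => a - ζ) (-1) z := by
    simpa using (hasDerivAt_id z).const_sub a
  have hden : HasDerivAt (fun ζ => 1 - conj a * ζ) (-conj a) z := by
    simpa using ((hasDerivAt_id z).const_mul (conj a)).const_sub 1
  refine (hnum.div hden h).congr_deriv ?_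
  ring

lemma continuousOn_mobius (ha : ‖a‖ < 1) : ContinuousOn (mobius a) (ball 0 1) := fun _ hz =>
  (hasDerivAt_mobius (one_sub_conj_mul_ne_zero ha (mem_ball_zero_iff.mp hz))).continuousAt
    |>.continuousWithinAt

end Mobius

section PseudoHyperbolic

variable {a u v w : ℂ}

lemma pd_eq_norm_mobius (u w : ℂ) : pd u w = ‖mobius w u‖ := by
  rw [pd, mobius, norm_div, norm_sub_rev w u]

lemma pd_comm (u v : ℂ) : pd u v = pd v u := by
  have h : ‖1 - conj v * u‖ = ‖1 - conj u * v‖ := by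
    rw [← Complex.norm_conj]; simp [mul_comm]
  rw [pd, pd, norm_sub_rev, h]

lemma pd_nonneg (u v : ℂ) : 0 ≤ pd u v := by
  unfold pd; positivity

lemma pd_lt_one_s2 (hu : ‖u‖ < 1) (hv : ‖v‖ < 1) : pd u v < 1 := by
  rw [pd_eq_norm_mobius]; exact norm_mobius_lt_one hv hu

lemma pd_mobius (ha : ‖a‖ < 1) (hu : ‖u‖ < 1) (hv : ‖v‖ < 1) :
    pd (mobius a u) (mobius a v) = pd u v := by
  have hau := one_sub_conj_mul_ne_zero ha hu
  have hav := one_sub_conj_mul_ne_zero ha hv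
  have haa := one_sub_conj_mul_ne_zero ha ha
  have hnum : mobius a u - mobius a v
      = (1 - conj a * a) * (v - u) / ((1 - conj a * u) * (1 - conj a * v)) := by
    rw [mobius, mobius, div_sub_div _ _ hau hav]; ring
  have hden : 1 - conj (mobius a v) * mobius a u
      = (1 - conj a * a) * (1 - conj v * u) / (conj (1 - conj a * v) * (1 - conj a * u)) := by
    rw [mobius, mobius, map_div₀, div_mul_div_comm,
      one_sub_div (mul_ne_zero ((map_ne_zero _).mpr hav) hau)]
    simp only [map_sub, map_mul, map_one, conj_conj]
    ring
  have hnorm : ∀ x : ℂ, x ≠ 0 → ‖x‖ ≠ 0 := fun x => norm_ne_zero_iff.mpr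
  rw [pd, hnum, hden, norm_div, norm_div, norm_mul, norm_mul, norm_mul, norm_mul,
    Complex.norm_conj, pd, norm_sub_rev v u]
  field_simp [hnorm _ haa, hnorm _ hau, hnorm _ hav]

lemma pd_le_norm_add_norm_div (hu : ‖u‖ < 1) (hv : ‖v‖ < 1) :
    pd u v ≤ (‖u‖ + ‖v‖) / (1 + ‖u‖ * ‖v‖) := by
  have hd := one_sub_conj_mul_ne_zero hv hu
  have hD : ‖1 - conj v * u‖ ≤ 1 + ‖u‖ * ‖v‖ := by
    calc ‖1 - conj v * u‖ ≤ ‖(1 : ℂ)‖ + ‖conj v * u‖ := norm_sub_le _ _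
      _ = 1 + ‖u‖ * ‖v‖ := by rw [norm_one, norm_mul, Complex.norm_conj, mul_comm]
  have hm := one_sub_normSq_mobius hd
  simp only [← Complex.sq_norm] at hm
  set k := (1 - ‖v‖ ^ 2) * (1 - ‖u‖ ^ 2) / ‖1 - conj v * u‖ ^ 2
  have hk0 : 0 ≤ k := div_nonneg
    (mul_nonneg (by nlinarith [norm_nonneg v]) (by nlinarith [norm_nonneg u])) (by positivity)
  have hkD : k * ‖1 - conj v * u‖ ^ 2 = (1 - ‖v‖ ^ 2) * (1 - ‖u‖ ^ 2) :=
    div_mul_cancel₀ _ (pow_ne_zero 2 (norm_ne_zero_iff.mpr hd))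
  have hD2 : ‖1 - conj v * u‖ ^ 2 ≤ (1 + ‖u‖ * ‖v‖) ^ 2 := pow_le_pow_left₀ (norm_nonneg _) hD 2
  rw [pd_eq_norm_mobius, le_div_iff₀ (by positivity)]
  refine le_of_pow_le_pow_left₀ two_ne_zero (by positivity) ?_
  nlinarith [mul_le_mul_of_nonneg_left hD2 hk0]

lemma pd_le_pd_add_pd_div (hu : ‖u‖ < 1) (hv : ‖v‖ < 1) (hw : ‖w‖ < 1) :
    pd u v ≤ (pd u w + pd w v) / (1 + pd u w * pd w v) := by
  rw [← pd_mobius hw hu hv, pd_eq_norm_mobius u w, pd_comm w v, pd_eq_norm_mobius v w]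
  exact pd_le_norm_add_norm_div (norm_mobius_lt_one hw hu) (norm_mobius_lt_one hw hv)

lemma pd_lt_of_lt_of_lt {s t : ℝ} (hu : ‖u‖ < 1) (hv : ‖v‖ < 1) (hw : ‖w‖ < 1)
    (hs : s ≤ 1) (ht : t ≤ 1) (huw : pd u w < s) (hwv : pd w v < t) :
    pd u v < (s + t) / (1 + s * t) := by
  refine (pd_le_pd_add_pd_div hu hv hw).trans_lt ?_
  have ha := pd_nonneg u w
  have hb := pd_nonneg w v
  rw [div_lt_div_iff₀ (by positivity) (by nlinarith)]
  -- `(s + t)(1 + ab) - (a + b)(1 + st) = (s - a)(1 - bt) + (t - b)(1 - as)`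
  nlinarith [mul_pos (sub_pos.mpr huw) (by nlinarith : 0 < 1 - pd w v * t),
    mul_pos (sub_pos.mpr hwv) (by nlinarith : 0 < 1 - pd u w * s)]

def pdBall (a : ℂ) (s : ℝ) : Set ℂ := {ζ | ‖ζ‖ < 1 ∧ pd a ζ < s}

lemma pdBall_eq_inter_preimage (a : ℂ) (s : ℝ) :
    pdBall a s = ball 0 1 ∩ mobius a ⁻¹' ball 0 s := by
  ext ζ
  simp only [pdBall, mem_ofPred_eq, mem_inter_iff, mem_preimage, mem_ball_zero_iff, pd_comm a,
    pd_eq_norm_mobius]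

lemma isOpen_pdBall (ha : ‖a‖ < 1) (s : ℝ) : IsOpen (pdBall a s) := by
  rw [pdBall_eq_inter_preimage]
  exact (continuousOn_mobius ha).isOpen_inter_preimage isOpen_ball isOpen_ball

lemma mobius_image_ball (ha : ‖a‖ < 1) {s : ℝ} (hs : s ≤ 1) :
    mobius a '' ball 0 s = pdBall a s := by
  rw [pdBall_eq_inter_preimage]
  ext ζ
  constructor
  · rintro ⟨x, hx, rfl⟩
    have hx1 : ‖x‖ < 1 := (mem_ball_zero_iff.mp hx).trans_le hs
    refine ⟨mem_ball_zero_iff.mpr (norm_mobius_lt_one ha hx1), ?_⟩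
    rwa [mem_preimage, mobius_mobius ha hx1]
  · rintro ⟨hζ, hζs⟩
    exact ⟨mobius a ζ, hζs, mobius_mobius ha (mem_ball_zero_iff.mp hζ)⟩

lemma pdBall_subset_pdBall {a b : ℂ} {s t : ℝ} (ha : ‖a‖ < 1) (hb : ‖b‖ < 1) (hs : s ≤ 1)
    (ht : t ≤ 1) (hab : pd a b < s) : pdBall b t ⊆ pdBall a ((s + t) / (1 + s * t)) :=
  fun _ hζ => ⟨hζ.1, pd_lt_of_lt_of_lt ha hζ.1 hb hs ht hab hζ.2⟩

lemma disjoint_pdBall {a b : ℂ} {t : ℝ} (ha : ‖a‖ < 1) (hb : ‖b‖ < 1) (ht : t ≤ 1)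
    (hab : 2 * t ≤ pd a b) : Disjoint (pdBall a t) (pdBall b t) := by
  refine disjoint_left.mpr fun ζ hζa hζb => hab.not_gt ?_
  have h := pd_lt_of_lt_of_lt ha hb hζa.1 ht ht hζa.2 (by rw [pd_comm]; exact hζb.2)
  have ht0 : 0 < t := (pd_nonneg a ζ).trans_lt hζa.2
  calc pd a b < (t + t) / (1 + t * t) := h
    _ ≤ 2 * t := by rw [div_le_iff₀ (by positivity)]; nlinarith

end PseudoHyperbolic

def hypArea : Measure ℂ := volume.withDensity fun ζ => ENNReal.ofReal ((1 - ‖ζ‖ ^ 2)⁻¹ ^ 2)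

lemma integral_mul_one_sub_sq_inv_sq {s : ℝ} (hs0 : 0 ≤ s) (hs1 : s < 1) :
    ∫ y in (0:ℝ)..s, y * (1 - y ^ 2)⁻¹ ^ 2 = s ^ 2 / (2 * (1 - s ^ 2)) := by
  have hne : ∀ y ∈ uIcc 0 s, 1 - y ^ 2 ≠ 0 := by
    intro y hy
    rw [uIcc_of_le hs0] at hy
    nlinarith [hy.1, hy.2]
  have hderiv : ∀ y ∈ uIcc 0 s,
      HasDerivAt (fun y : ℝ => (2 * (1 - y ^ 2))⁻¹) (y * (1 - y ^ 2)⁻¹ ^ 2) y := by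
    intro y hy
    refine ((((hasDerivAt_pow 2 y).const_sub 1).const_mul 2).inv
      (mul_ne_zero two_ne_zero (hne y hy))).congr_deriv ?_
    have := hne y hy
    field_simp
    ring
  have hcont : ContinuousOn (fun y : ℝ => y * (1 - y ^ 2)⁻¹ ^ 2) (uIcc 0 s) :=
    continuousOn_id.mul ((ContinuousOn.inv₀ (by fun_prop) hne).pow 2)
  rw [intervalIntegral.integral_eq_sub_of_hasDerivAt hderiv hcont.intervalIntegrable]
  have := hne s right_mem_uIcc
  field_simp
  ring

lemma hypArea_ball {s : ℝ} (hs0 : 0 ≤ s) (hs1 : s < 1) :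
    hypArea (ball 0 s) = ENNReal.ofReal (Real.pi * s ^ 2 / (1 - s ^ 2)) := by
  set g : ℝ → ℝ := (Iio s).indicator fun y => (1 - y ^ 2)⁻¹ ^ 2
  have hcont : ContinuousOn (fun ζ : ℂ => (1 - ‖ζ‖ ^ 2)⁻¹ ^ 2) (closedBall 0 s) := by
    refine (ContinuousOn.inv₀ (by fun_prop) fun ζ hζ => ?_).pow 2
    rw [mem_closedBall_zero_iff] at hζ
    nlinarith [norm_nonneg ζ]
  have hint : IntegrableOn (fun ζ : ℂ => (1 - ‖ζ‖ ^ 2)⁻¹ ^ 2) (ball 0 s) :=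
    (hcont.integrableOn_compact (isCompact_closedBall _ _)).mono_set ball_subset_closedBall
  rw [hypArea, withDensity_apply _ measurableSet_ball,
    ← ofReal_integral_eq_lintegral_ofReal hint (ae_of_all _ fun ζ => by positivity)]
  congr 1
  have hind : (ball (0 : ℂ) s).indicator (fun ζ => (1 - ‖ζ‖ ^ 2)⁻¹ ^ 2) = fun ζ => g ‖ζ‖ := by
    ext ζ
    simp only [g, indicator, mem_ball_zero_iff, mem_Iio]
  have hvol : volume.real (ball (0 : ℂ) 1) = Real.pi := by
    simp [Measure.real, Complex.volume_ball]
  have hradial : ∫ y in Ioi (0 : ℝ), y ^ (2 - 1) • g y = s ^ 2 / (2 * (1 - s ^ 2)) := by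
    have : (fun y : ℝ => y ^ (2 - 1) • g y) = (Iio s).indicator fun y => y * (1 - y ^ 2)⁻¹ ^ 2 := by
      ext y
      rw [indicator_mul_right, smul_eq_mul, pow_one]
    rw [this, integral_indicator measurableSet_Iio, Measure.restrict_restrict measurableSet_Iio,
      Iio_inter_Ioi, ← integral_Ioc_eq_integral_Ioo, ← intervalIntegral.integral_of_le hs0]
    exact integral_mul_one_sub_sq_inv_sq hs0 hs1
  rw [← integral_indicator measurableSet_ball, hind, integral_fun_norm_addHaar volume g,
    Complex.finrank_real_complex, hvol, hradial]
  have : 1 - s ^ 2 ≠ 0 := by nlinarith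
  rw [nsmul_eq_mul, smul_eq_mul]
  field_simp
  push_cast
  ring

lemma det_restrictScalars_toSpanSingleton (c : ℂ) :
    ((ContinuousLinearMap.toSpanSingleton ℂ c).restrictScalars ℝ).det = normSq c := by
  rw [ContinuousLinearMap.det, ContinuousLinearMap.coe_restrictScalars,
    LinearMap.det_restrictScalars]
  simp [Algebra.norm_complex_eq]

lemma lintegral_image_eq_lintegral_normSq_deriv_mul {f f' : ℂ → ℂ} {s : Set ℂ}
    (hs : MeasurableSet s) (hf : ∀ x ∈ s, HasDerivAt f (f' x) x) (hinj : InjOn f s)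
    (g : ℂ → ℝ≥0∞) :
    ∫⁻ x in f '' s, g x = ∫⁻ x in s, ENNReal.ofReal (normSq (f' x)) * g (f x) := by
  rw [lintegral_image_eq_lintegral_abs_det_fderiv_mul volume hs
    (fun x hx => ((hf x hx).hasFDerivAt.restrictScalars ℝ).hasFDerivWithinAt) hinj]
  simp only [det_restrictScalars_toSpanSingleton, abs_of_nonneg (normSq_nonneg _)]

lemma normSq_deriv_mobius_mul_inv_sq {a z : ℂ} (ha : ‖a‖ < 1) (hz : ‖z‖ < 1) :
    normSq ((conj a * a - 1) / (1 - conj a * z) ^ 2) * (1 - ‖mobius a z‖ ^ 2)⁻¹ ^ 2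
      = (1 - ‖z‖ ^ 2)⁻¹ ^ 2 := by
  have hd := one_sub_conj_mul_ne_zero ha hz
  have hd' : normSq (1 - conj a * z) ≠ 0 := normSq_eq_zero.not.mpr hd
  have ha' : 1 - normSq a ≠ 0 := (sub_pos.mpr (normSq_lt_one_of_norm_lt_one ha)).ne'
  have hz' : 1 - normSq z ≠ 0 := (sub_pos.mpr (normSq_lt_one_of_norm_lt_one hz)).ne'
  have hnum : conj a * a - 1 = ((normSq a - 1 : ℝ) : ℂ) := by
    rw [ofReal_sub, normSq_eq_conj_mul_self, ofReal_one]
  simp only [Complex.sq_norm]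
  rw [one_sub_normSq_mobius hd, normSq_div, hnum, normSq_ofReal, map_pow]
  field_simp
  ring

lemma hypArea_image_mobius {a : ℂ} (ha : ‖a‖ < 1) {s : Set ℂ} (hs : MeasurableSet s)
    (hs1 : s ⊆ ball 0 1) : hypArea (mobius a '' s) = hypArea s := by
  have hderiv : ∀ z ∈ s, HasDerivAt (mobius a) ((conj a * a - 1) / (1 - conj a * z) ^ 2) z :=
    fun z hz => hasDerivAt_mobius (one_sub_conj_mul_ne_zero ha (mem_ball_zero_iff.mp (hs1 hz)))
  rw [hypArea, withDensity_apply' _, withDensity_apply _ hs,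
    lintegral_image_eq_lintegral_normSq_deriv_mul hs hderiv ((injOn_mobius ha).mono hs1)]
  refine setLIntegral_congr_fun hs fun z hz => ?_
  rw [← ENNReal.ofReal_mul (normSq_nonneg _),
    normSq_deriv_mobius_mul_inv_sq ha (mem_ball_zero_iff.mp (hs1 hz))]

lemma hypArea_pdBall {a : ℂ} (ha : ‖a‖ < 1) {s : ℝ} (hs0 : 0 ≤ s) (hs1 : s < 1) :
    hypArea (pdBall a s) = ENNReal.ofReal (Real.pi * s ^ 2 / (1 - s ^ 2)) := by
  rw [← mobius_image_ball ha hs1.le, hypArea_image_mobius ha measurableSet_ball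
    (ball_subset_ball hs1.le), hypArea_ball hs0 hs1]

lemma le_of_mul_div_one_sub_sq_le {n r t : ℝ} (hr0 : 0 ≤ r) (hr1 : r < 1) (ht0 : 0 < t)
    (ht1 : t < 1)
    (h : n * (Real.pi * t ^ 2 / (1 - t ^ 2))
      ≤ Real.pi * ((r + t) / (1 + r * t)) ^ 2 / (1 - ((r + t) / (1 + r * t)) ^ 2)) :
    n ≤ ((1 + t) / t) ^ 2 * (1 / (1 - r ^ 2)) := by
  have hr2 : 0 < 1 - r ^ 2 := by nlinarith
  have ht2 : 0 < 1 - t ^ 2 := by nlinarith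
  have hrt : 0 < 1 + r * t := by positivity
  set c := Real.pi / ((1 - r ^ 2) * (1 - t ^ 2))
  have hlhs : n * (Real.pi * t ^ 2 / (1 - t ^ 2)) = c * (n * t ^ 2 * (1 - r ^ 2)) := by
    simp only [c]
    field_simp
  have hrhs : Real.pi * ((r + t) / (1 + r * t)) ^ 2 / (1 - ((r + t) / (1 + r * t)) ^ 2)
      = c * (r + t) ^ 2 := by
    have h1R : 1 - ((r + t) / (1 + r * t)) ^ 2 = (1 - r ^ 2) * (1 - t ^ 2) / (1 + r * t) ^ 2 := by
      field_simp
      ring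
    rw [h1R]
    simp only [c]
    field_simp
  rw [hlhs, hrhs, mul_le_mul_iff_right₀ (by positivity)] at h
  rw [div_pow, div_mul_div_comm, mul_one, le_div_iff₀ (by positivity)]
  nlinarith

theorem stmt2 (zs : ℕ → ℂ) (hz : ∀ m, zs m ∈ Metric.ball (0:ℂ) 1)
    (δ : ℝ) (hδ : 0 < δ) (hsep : ∀ n m, n ≠ m → δ ≤ pd (zs n) (zs m))
    (z : ℂ) (hzb : z ∈ Metric.ball (0:ℂ) 1) (r : ℝ) (hr0 : 0 < r) (hr1 : r < 1) :
    {m : ℕ | pd z (zs m) < r}.Finite ∧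
      ({m : ℕ | pd z (zs m) < r}.ncard : ℝ) ≤ (2/δ + 1)^2 * (1/(1 - r^2)) := by
  have hzs : ∀ m, ‖zs m‖ < 1 := fun m => mem_ball_zero_iff.mp (hz m)
  have hz1 : ‖z‖ < 1 := mem_ball_zero_iff.mp hzb
  set t := δ / 2 with ht
  have ht0 : 0 < t := by positivity
  have ht1 : t < 1 := by
    linarith [(hsep 0 1 zero_ne_one).trans_lt (pd_lt_one_s2 (hzs 0) (hzs 1))]
  set R := (r + t) / (1 + r * t)
  have hR0 : 0 ≤ R := by positivity
  have hR1 : R < 1 := by rw [div_lt_one (by positivity)]; nlinarith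
  have hc : 0 < Real.pi * t ^ 2 / (1 - t ^ 2) := div_pos (by positivity) (by nlinarith)
  have hC : 0 ≤ Real.pi * R ^ 2 / (1 - R ^ 2) := div_nonneg (by positivity) (by nlinarith)
  obtain ⟨hfin, hle⟩ := finite_and_ncard_mul_le_of_pairwiseDisjoint hypArea
    (S := {m | pd z (zs m) < r}) (E := fun m => pdBall (zs m) t) (F := pdBall z R)
    (ENNReal.ofReal_pos.mpr hc).ne'
    (by rw [hypArea_pdBall hz1 hR0 hR1]; exact ENNReal.ofReal_ne_top)
    (fun m _ => (isOpen_pdBall (hzs m) t).measurableSet)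
    (fun m _ n _ hmn => disjoint_pdBall (hzs m) (hzs n) ht1.le (by linarith [hsep m n hmn]))
    (fun m hm => pdBall_subset_pdBall hz1 (hzs m) hr1.le ht1.le hm)
    (fun m _ => (hypArea_pdBall (hzs m) ht0.le ht1).ge)
  refine ⟨hfin, ?_⟩
  rw [hypArea_pdBall hz1 hR0 hR1, ← ENNReal.ofReal_natCast, ← ENNReal.ofReal_mul (by positivity),
    ENNReal.ofReal_le_ofReal_iff hC] at hle
  have hδt : 2 / δ + 1 = (1 + t) / t := by rw [ht]; field_simp
  rw [hδt]
  exact le_of_mul_div_one_sub_sq_le hr0.le hr1 ht0 ht1 hle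
end
end

section
/- Let A be a Banach space of analytic functions on the unit disc, Γ = (z_k) a sequence of distinct points in D, X a Banach sequence space, and R_Γ the map f ↦ (f(z_k)). Assume: (1) each standard basis sequence e^{(k)} belongs to X; (2) each coordinate projection P_k is bounded on X with sup_k ‖P_k‖ < ∞; (3) there is C_A such that whenever f ∈ A with f(z_k) = 0, the function f/M_{z_k} belongs to A and ‖f/M_{z_k}‖_A ≤ C_A ‖f‖_A, where M_a(z) = (a-z)/(1-conj(a)z); (4) convergence in A implies pointwise convergence on Γ. If R_Γ(A) = X then Γ is uniformly discrete. -/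
/-!
The restriction map `R : A → X` is continuous by the closed graph theorem (coordinates are
continuous on `X` because the projections `P k` are bounded and `e⁽ᵏ⁾ ≠ 0`) and onto, so by the
open mapping theorem each `e⁽ⁿ⁾` has a preimage `f` with `‖f‖ ≤ C ‖e⁽ⁿ⁾‖`. For `m ≠ n`, `f`
vanishes at `z_m`, so `f = M_{z_m} g` with `‖g‖ ≤ C_A ‖f‖`. Evaluating at `z_n` gives
`1 = ρ(z_n, z_m) |g(z_n)|`, while `|g(z_n)| ‖e⁽ⁿ⁾‖ ≤ (sup ‖P k‖) ‖R‖ ‖g‖` bounds `|g(z_n)|`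
independently of `n` and `m`.
-/

open MeasureTheory Complex

noncomputable section

open Function

section SequenceSpace

variable {𝕜 X κ : Type*} [NontriviallyNormedField 𝕜] [NormedAddCommGroup X] [NormedSpace 𝕜 X]
  [DecidableEq κ] {jX : X →ₗ[𝕜] (κ → 𝕜)} {e : X} {k : κ}

theorem norm_coord_mul_norm_le (hjX : Injective jX)
    (he : jX e = fun n => if n = k then 1 else 0) {P : X →L[𝕜] X}
    (hP : ∀ x, jX (P x) = fun n => if n = k then jX x k else 0) (x : X) :
    ‖jX x k‖ * ‖e‖ ≤ ‖P‖ * ‖x‖ := by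
  have hPx : P x = jX x k • e := hjX <| by
    rw [map_smul, hP, he]
    funext n
    by_cases h : n = k <;> simp [h]
  rw [← norm_smul, ← hPx]
  exact P.le_opNorm x

theorem ne_zero_of_coord_eq_one (he : jX e = fun n => if n = k then 1 else 0) : e ≠ 0 := by
  rintro rfl
  simpa using congrFun he k

theorem continuous_coord (hjX : Injective jX)
    (he : jX e = fun n => if n = k then 1 else 0) {P : X →L[𝕜] X}
    (hP : ∀ x, jX (P x) = fun n => if n = k then jX x k else 0) :
    Continuous fun x => jX x k := by
  have he0 : 0 < ‖e‖ := norm_pos_iff.mpr (ne_zero_of_coord_eq_one he)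
  refine AddMonoidHomClass.continuous_of_bound ((LinearMap.proj k).comp jX) (‖P‖ / ‖e‖)
    fun x => ?_
  rw [div_mul_eq_mul_div, le_div_iff₀ he0]
  exact norm_coord_mul_norm_le hjX he hP x

end SequenceSpace

theorem exists_continuousLinearMap_lift_of_continuous_coord
    {𝕜 A X κ : Type*} [NontriviallyNormedField 𝕜]
    [NormedAddCommGroup A] [NormedSpace 𝕜 A] [CompleteSpace A]
    [NormedAddCommGroup X] [NormedSpace 𝕜 X] [CompleteSpace X]
    {jX : X →ₗ[𝕜] (κ → 𝕜)} (hjX : Injective jX) (hjXc : ∀ k, Continuous fun x => jX x k)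
    (T : A →ₗ[𝕜] (κ → 𝕜)) (hTc : ∀ k, Continuous fun f => T f k)
    (hT : LinearMap.range T ≤ LinearMap.range jX) :
    ∃ R : A →L[𝕜] X, ∀ f, jX (R f) = T f := by
  let R : A →ₗ[𝕜] X :=
    (LinearEquiv.ofInjective jX hjX).symm.toLinearMap ∘ₗ T.codRestrict _ fun f => hT ⟨f, rfl⟩
  have hR f : jX (R f) = T f := by
    simp [R]
  refine ⟨⟨R, R.continuous_of_seq_closed_graph fun u x y hu hRu => hjX ?_⟩, hR⟩
  funext k
  refine tendsto_nhds_unique (((hjXc k).tendsto y).comp hRu) ?_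
  simpa [Function.comp_def, hR] using ((hTc k).tendsto x).comp hu

theorem pd_nonneg_s9 (z w : ℂ) : 0 ≤ pd z w := by
  unfold pd; positivity

theorem one_eq_pd_mul_norm {F G : ℂ → ℂ} {z w : ℂ} (hF : F z = 1)
    (hFG : F z = (w - z) / (1 - (starRingEnd ℂ) w * z) * G z) :
    1 = pd z w * ‖G z‖ := by
  rw [pd, ← norm_sub_rev, ← norm_div, ← norm_mul, ← hFG, hF, norm_one]

theorem exists_pos_le_of_one_le_mul {ι : Type*} {d : ι → ι → ℝ} (hd : ∀ n m, 0 ≤ d n m) (K : ℝ)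
    (hK : ∀ n m, n ≠ m → 1 ≤ d n m * K) :
    ∃ δ > 0, ∀ n m, n ≠ m → δ ≤ d n m := by
  refine ⟨1 / max K 1, by positivity, fun n m hnm => ?_⟩
  rw [div_le_iff₀ (by positivity)]
  exact (hK n m hnm).trans (by gcongr; exacts [hd n m, le_max_left K 1])

theorem stmt9_general
    {A : Type*} [NormedAddCommGroup A] [NormedSpace ℂ A] [CompleteSpace A]
    {X : Type*} [NormedAddCommGroup X] [NormedSpace ℂ X] [CompleteSpace X]
    -- A is a Banach space of analytic functions on the disc
    (ι : A →ₗ[ℂ] (ℂ → ℂ))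
    -- X is a Banach space of sequences
    (jX : X →ₗ[ℂ] (ℕ → ℂ)) (hjXinj : Function.Injective jX)
    -- Γ is a sequence of distinct points of the disc
    (zs : ℕ → ℂ) (hzs : ∀ k, zs k ∈ Metric.ball (0:ℂ) 1)
    -- (1) each standard basis sequence belongs to X
    (h1 : ∀ k : ℕ, ∃ x : X, jX x = fun n => if n = k then 1 else 0)
    -- (2) coordinate projections are uniformly bounded on X
    (P : ℕ → X →L[ℂ] X)
    (hP : ∀ (k : ℕ) (x : X), jX (P k x) = fun n => if n = k then jX x k else 0)
    (hPbdd : ∃ M : ℝ, ∀ k, ‖P k‖ ≤ M)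
    -- (3) division by the Möbius factor M_{z_k}
    (CA : ℝ)
    (h3 : ∀ (k : ℕ) (f : A), ι f (zs k) = 0 →
      ∃ g : A, (∀ z ∈ Metric.ball (0:ℂ) 1,
          ι f z = ((zs k - z) / (1 - (starRingEnd ℂ) (zs k) * z)) * ι g z) ∧
        ‖g‖ ≤ CA * ‖f‖)
    -- (4) convergence in A implies pointwise convergence on Γ
    (h4 : ∀ k : ℕ, Continuous fun f : A => ι f (zs k))
    -- R_Γ(A) = X
    (honto : ∀ x : X, ∃ f : A, ∀ k, ι f (zs k) = jX x k)
    (hinto : ∀ f : A, ∃ x : X, ∀ k, jX x k = ι f (zs k)) :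
    ∃ δ > 0, ∀ n m, n ≠ m → δ ≤ pd (zs n) (zs m) := by
  obtain ⟨M, hM⟩ := hPbdd
  have hM0 : 0 ≤ M := (norm_nonneg _).trans (hM 0)
  choose e he using h1
  obtain ⟨R, hR⟩ := exists_continuousLinearMap_lift_of_continuous_coord hjXinj
    (fun k => continuous_coord hjXinj (he k) (hP k)) (LinearMap.funLeft ℂ ℂ zs ∘ₗ ι) h4
    (by rintro _ ⟨f, rfl⟩; obtain ⟨x, hx⟩ := hinto f; exact ⟨x, funext hx⟩)
  have hRsurj : Surjective R := fun x => by
    obtain ⟨f, hf⟩ := honto x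
    exact ⟨f, hjXinj <| by rw [hR]; exact funext hf⟩
  obtain ⟨C, -, hC⟩ := R.exists_preimage_norm_le hRsurj
  refine exists_pos_le_of_one_le_mul (fun _ _ => pd_nonneg_s9 _ _) (M * ‖R‖ * max CA 0 * C)
    fun n m hnm => ?_
  obtain ⟨f, hf, hfC⟩ := hC (e n)
  have hfz k : ι f (zs k) = if k = n then 1 else 0 := congrFun (hR f ▸ hf ▸ he n) k
  obtain ⟨g, hfg, hgf⟩ := h3 m f (by simp [hfz, hnm.symm])
  have hgn : ‖ι g (zs n)‖ * ‖e n‖ ≤ M * ‖R‖ * max CA 0 * C * ‖e n‖ := calc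
    ‖ι g (zs n)‖ * ‖e n‖ = ‖jX (R g) n‖ * ‖e n‖ := by rw [hR]; rfl
    _ ≤ M * ‖R g‖ :=
      (norm_coord_mul_norm_le hjXinj (he n) (hP n) _).trans (by gcongr; exact hM n)
    _ ≤ M * (‖R‖ * ‖g‖) := by gcongr; exact R.le_opNorm g
    _ ≤ M * (‖R‖ * (max CA 0 * (C * ‖e n‖))) := by
      gcongr
      exact hgf.trans (by gcongr; exact le_max_left CA 0)
    _ = M * ‖R‖ * max CA 0 * C * ‖e n‖ := by ring
  calc 1 = pd (zs n) (zs m) * ‖ι g (zs n)‖ := one_eq_pd_mul_norm (by simp [hfz]) (hfg _ (hzs n))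
    _ ≤ pd (zs n) (zs m) * (M * ‖R‖ * max CA 0 * C) := by
      gcongr
      · exact pd_nonneg_s9 _ _
      · exact le_of_mul_le_mul_right hgn (norm_pos_iff.mpr (ne_zero_of_coord_eq_one (he n)))

theorem stmt9
    {A : Type*} [NormedAddCommGroup A] [NormedSpace ℂ A] [CompleteSpace A]
    {X : Type*} [NormedAddCommGroup X] [NormedSpace ℂ X] [CompleteSpace X]
    -- A is a Banach space of analytic functions on the disc
    (ι : A →ₗ[ℂ] (ℂ → ℂ)) (hιinj : Function.Injective ι)
    (hι : ∀ f : A, AnalyticOn ℂ (ι f) (Metric.ball 0 1))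
    -- X is a Banach space of sequences
    (jX : X →ₗ[ℂ] (ℕ → ℂ)) (hjXinj : Function.Injective jX)
    -- Γ is a sequence of distinct points of the disc
    (zs : ℕ → ℂ) (hzs : ∀ k, zs k ∈ Metric.ball (0:ℂ) 1) (hdist : Function.Injective zs)
    -- (1) each standard basis sequence belongs to X
    (h1 : ∀ k : ℕ, ∃ x : X, jX x = fun n => if n = k then 1 else 0)
    -- (2) coordinate projections are uniformly bounded on X
    (P : ℕ → X →L[ℂ] X)
    (hP : ∀ (k : ℕ) (x : X), jX (P k x) = fun n => if n = k then jX x k else 0)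
    (hPbdd : ∃ M : ℝ, ∀ k, ‖P k‖ ≤ M)
    -- (3) division by the Möbius factor M_{z_k}
    (CA : ℝ)
    (h3 : ∀ (k : ℕ) (f : A), ι f (zs k) = 0 →
      ∃ g : A, (∀ z ∈ Metric.ball (0:ℂ) 1,
          ι f z = ((zs k - z) / (1 - (starRingEnd ℂ) (zs k) * z)) * ι g z) ∧
        ‖g‖ ≤ CA * ‖f‖)
    -- (4) convergence in A implies pointwise convergence on Γ
    (h4 : ∀ k : ℕ, Continuous fun f : A => ι f (zs k))
    -- R_Γ(A) = X
    (honto : ∀ x : X, ∃ f : A, ∀ k, ι f (zs k) = jX x k)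
    (hinto : ∀ f : A, ∃ x : X, ∀ k, jX x k = ι f (zs k)) :
    ∃ δ > 0, ∀ n m, n ≠ m → δ ≤ pd (zs n) (zs m) :=
  stmt9_general ι jX hjXinj zs hzs h1 P hP hPbdd CA h3 h4 honto hinto
end
end

section
/- Let 0<p,q<∞. Let Γ = (z_m) and Γ' = (z'_m) be sequences in the unit disc with no limit points in the disc such that ρ(z_m,z'_m) < δ for all m. If δ < 1/20 then every sequence (a_m) ∈ l^{p,q}(Γ) also belongs to l^{p,q}(Γ'), with ‖(a_m)‖_{l^{p,q}(Γ')}^q ≤ 3 β^{-(1+q/p)} C_{q/p} ‖(a_m)‖_{l^{p,q}(Γ)}^q where C_α = max{1, 3^{α-1}}. -/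
open MeasureTheory Complex

noncomputable section

/-- The radii `r_j = 1 - β^j` with `β = 1/L`. -/
def rn (L : ℕ) (j : ℕ) : ℝ := 1 - ((1:ℝ)/L) ^ j

/-- The `q`-th power of the mixed sequence norm of `(a_m)` relative to points `(w_m)`:
the terms are grouped according to the annulus `A_j` containing `w_m`. -/
def lnorm (p q : ℝ) (L : ℕ) (a : ℕ → ℂ) (w : ℕ → ℂ) : ENNReal :=
  ∑' j : ℕ, (ENNReal.ofReal (((1:ℝ)/L) ^ j)) ^ (1 + q/p) *
    (∑' m : ℕ, if rn L j ≤ ‖w m‖ ∧ ‖w m‖ < rn L (j+1)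
      then ENNReal.ofReal (‖a m‖ ^ p) else 0) ^ (q/p)

/-!
If `ρ(z, w) < δ < 1`, then `1 - |w| ≤ (1 + δ)/(1 - δ) · (1 - |z|)`, and for `δ ≤ 1/3` this factor
is at most `2 ≤ L = β⁻¹`; so `z'_m` lies in the annulus of `z_m` or in one of its two neighbours.
Each annulus sum for `Γ'` is therefore dominated by three consecutive annulus sums for `Γ`.
Raising to the power `q/p` costs the factor `C_{q/p}`, and moving an index by one changes the
weight `β^{j(1+q/p)}` by at most `β^{-(1+q/p)}`.
-/

open scoped ENNReal

lemma pd_comm_s14 (z w : ℂ) : pd z w = pd w z := by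
  have h : ‖1 - (starRingEnd ℂ) w * z‖ = ‖1 - (starRingEnd ℂ) z * w‖ := by
    rw [← Complex.norm_conj]
    simp only [map_sub, map_one, map_mul, Complex.conj_conj, mul_comm]
  rw [pd, pd, norm_sub_rev, h]

lemma norm_one_sub_conj_mul_le {z : ℂ} (hz : ‖z‖ ≤ 1) (w : ℂ) :
    ‖1 - (starRingEnd ℂ) w * z‖ ≤ 2 * (1 - ‖z‖) + ‖z - w‖ := by
  have hsplit : 1 - (starRingEnd ℂ) w * z
      = (((1 - ‖z‖ ^ 2 : ℝ)) : ℂ) + (starRingEnd ℂ) (z - w) * z := by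
    push_cast
    rw [← Complex.conj_mul', map_sub]
    ring
  have h1 : ‖(((1 - ‖z‖ ^ 2 : ℝ)) : ℂ)‖ ≤ 2 * (1 - ‖z‖) := by
    rw [Complex.norm_real, Real.norm_of_nonneg (by nlinarith [norm_nonneg z])]
    nlinarith [norm_nonneg z]
  have h2 : ‖(starRingEnd ℂ) (z - w) * z‖ ≤ ‖z - w‖ := by
    rw [norm_mul, Complex.norm_conj]
    exact mul_le_of_le_one_right (norm_nonneg _) hz
  rw [hsplit]
  exact (norm_add_le _ _).trans (add_le_add h1 h2)

lemma one_sub_norm_le_of_pd_lt {z w : ℂ} (hz : ‖z‖ < 1) (hw : ‖w‖ < 1) {δ : ℝ} (hδ : δ < 1)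
    (h : pd z w < δ) : 1 - ‖w‖ ≤ (1 + δ) / (1 - δ) * (1 - ‖z‖) := by
  have hden : 0 < ‖1 - (starRingEnd ℂ) w * z‖ := by
    have : ‖(starRingEnd ℂ) w * z‖ < 1 := by
      rw [norm_mul, Complex.norm_conj]
      nlinarith [norm_nonneg z, norm_nonneg w]
    linarith [norm_sub_norm_le (1 : ℂ) ((starRingEnd ℂ) w * z), norm_one (α := ℂ)]
  have hzw : ‖z - w‖ < δ * ‖1 - (starRingEnd ℂ) w * z‖ := by
    rwa [pd, div_lt_iff₀ hden] at h
  have hδ0 : 0 ≤ δ := (div_nonneg (norm_nonneg _) (norm_nonneg _)).trans h.le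
  have hzw' : ‖z - w‖ * (1 - δ) ≤ 2 * δ * (1 - ‖z‖) := by
    nlinarith [norm_one_sub_conj_mul_le hz.le w]
  rw [div_mul_eq_mul_div, le_div_iff₀ (by linarith)]
  nlinarith [norm_sub_norm_le z w]

def annulus (L j : ℕ) : Set ℝ := Set.Ico (rn L j) (rn L (j + 1))

-- The instance `lnorm` uses, so that `annulusSum` below unfolds to its inner sum.
instance (L j : ℕ) : DecidablePred (· ∈ annulus L j) :=
  fun r => inferInstanceAs (Decidable (rn L j ≤ r ∧ r < rn L (j + 1)))

lemma mem_annulus_iff {L j : ℕ} {r : ℝ} :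
    r ∈ annulus L j ↔ ((1:ℝ) / L) ^ (j + 1) < 1 - r ∧ 1 - r ≤ ((1:ℝ) / L) ^ j := by
  simp only [annulus, rn, Set.mem_Ico]
  constructor <;> rintro ⟨h1, h2⟩ <;> constructor <;> linarith

lemma exists_mem_annulus {L : ℕ} (hL : 1 < L) {r : ℝ} (hr0 : 0 ≤ r) (hr1 : r < 1) :
    ∃ j, r ∈ annulus L j := by
  have hr : (0:ℝ) < 1 - r := by linarith
  obtain ⟨j, hj1, hj2⟩ := exists_nat_pow_near (x := (1 - r)⁻¹)
    ((one_le_inv₀ hr).mpr (by linarith)) (by exact_mod_cast hL : (1:ℝ) < L)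
  refine ⟨j, mem_annulus_iff.mpr ⟨?_, ?_⟩⟩
  · rwa [one_div_pow, one_div, inv_lt_comm₀ (by positivity) hr]
  · rwa [one_div_pow, one_div, le_inv_comm₀ hr (by positivity)]

lemma le_succ_of_pow_lt_of_le_mul {β K x y : ℝ} (hβ0 : 0 < β) (hβ1 : β < 1) (hβK : β * K ≤ 1)
    {i j : ℕ} (hx0 : 0 ≤ x) (hx : x ≤ β ^ i) (hy : β ^ (j + 1) < y) (hyx : y ≤ K * x) :
    i ≤ j + 1 := by
  have key : β ^ (j + 2) < β ^ i :=
    calc β ^ (j + 2) = β * β ^ (j + 1) := by ring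
      _ < β * y := by gcongr
      _ ≤ (β * K) * x := by rw [mul_assoc]; gcongr
      _ ≤ x := mul_le_of_le_one_left hx0 hβK
      _ ≤ β ^ i := hx
  have := (pow_lt_pow_iff_right_of_lt_one₀ hβ0 hβ1).mp key
  omega

lemma annulus_index_le_succ {L : ℕ} (hL : 2 ≤ L) {z w : ℂ} (hz : ‖z‖ < 1) (hw : ‖w‖ < 1)
    {δ : ℝ} (hδ : δ ≤ 1 / 3) (h : pd z w < δ) {i j : ℕ}
    (hi : ‖z‖ ∈ annulus L i) (hj : ‖w‖ ∈ annulus L j) : i ≤ j + 1 := by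
  have hL' : (2:ℝ) ≤ L := by exact_mod_cast hL
  have hK : ((1:ℝ) / L) * ((1 + δ) / (1 - δ)) ≤ 1 := by
    rw [div_mul_div_comm, div_le_one (by nlinarith)]
    nlinarith
  exact le_succ_of_pow_lt_of_le_mul (by positivity) (by rw [div_lt_one] <;> linarith) hK
    (by linarith) (mem_annulus_iff.mp hi).2 (mem_annulus_iff.mp hj).1
    (one_sub_norm_le_of_pd_lt hz hw (by linarith) h)

lemma add_add_rpow_le {α : ℝ} (hα : 0 ≤ α) (x y z : ℝ≥0∞) :
    (x + y + z) ^ α ≤ ENNReal.ofReal (max 1 ((3:ℝ) ^ (α - 1))) * (x ^ α + y ^ α + z ^ α) := by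
  rcases le_or_gt α 1 with hα1 | hα1
  · calc (x + y + z) ^ α ≤ (x + y) ^ α + z ^ α := ENNReal.rpow_add_le_add_rpow _ _ hα hα1
      _ ≤ x ^ α + y ^ α + z ^ α := by gcongr; exact ENNReal.rpow_add_le_add_rpow _ _ hα hα1
      _ ≤ _ := le_mul_of_one_le_left' (by simp)
  · have h := ENNReal.rpow_sum_le_const_mul_sum_rpow (s := Finset.univ) (f := ![x, y, z]) hα1.le
    simp only [Fin.sum_univ_three, Finset.card_univ, Fintype.card_fin, Matrix.cons_val_zero,
      Matrix.cons_val_one, Matrix.cons_val_two, Matrix.head_cons, Matrix.tail_cons] at h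
    refine h.trans (mul_le_mul_left ?_ _)
    rw [← ENNReal.ofReal_natCast, ENNReal.ofReal_rpow_of_nonneg (by norm_num) (by linarith)]
    exact ENNReal.ofReal_le_ofReal (le_max_right _ _)

def annulusSum (p : ℝ) (L : ℕ) (a w : ℕ → ℂ) (j : ℕ) : ℝ≥0∞ :=
  ∑' m, if ‖w m‖ ∈ annulus L j then ENNReal.ofReal (‖a m‖ ^ p) else 0

lemma lnorm_eq_tsum_pow_mul (p q : ℝ) (L : ℕ) (a w : ℕ → ℂ) :
    lnorm p q L a w =
      ∑' j, (ENNReal.ofReal (1 / L) ^ (1 + q / p)) ^ j * annulusSum p L a w j ^ (q / p) := by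
  refine tsum_congr fun j => ?_
  rw [ENNReal.ofReal_pow (by positivity), ← ENNReal.rpow_natCast, ← ENNReal.rpow_natCast,
    ← ENNReal.rpow_mul, ← ENNReal.rpow_mul, mul_comm (j : ℝ)]
  rfl

lemma annulusSum_le_adjacent (p : ℝ) {L : ℕ} (hL : 2 ≤ L) (a : ℕ → ℂ) {z w : ℕ → ℂ}
    (hz : ∀ m, ‖z m‖ < 1) (hw : ∀ m, ‖w m‖ < 1) {δ : ℝ} (hδ : δ ≤ 1 / 3)
    (h : ∀ m, pd (z m) (w m) < δ) (j : ℕ) :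
    annulusSum p L a w j ≤
      (if j = 0 then 0 else annulusSum p L a z (j - 1)) + annulusSum p L a z j
        + annulusSum p L a z (j + 1) := by
  have hterm : ∀ m, (if ‖w m‖ ∈ annulus L j then ENNReal.ofReal (‖a m‖ ^ p) else 0) ≤
      (if j = 0 then 0 else if ‖z m‖ ∈ annulus L (j - 1) then ENNReal.ofReal (‖a m‖ ^ p) else 0)
        + (if ‖z m‖ ∈ annulus L j then ENNReal.ofReal (‖a m‖ ^ p) else 0)
        + (if ‖z m‖ ∈ annulus L (j + 1) then ENNReal.ofReal (‖a m‖ ^ p) else 0) := by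
    intro m
    by_cases hwj : ‖w m‖ ∈ annulus L j
    · obtain ⟨i, hi⟩ := exists_mem_annulus (L := L) (by omega) (norm_nonneg _) (hz m)
      have hij := annulus_index_le_succ hL (hz m) (hw m) hδ (h m) hi hwj
      have hji := annulus_index_le_succ hL (hw m) (hz m) hδ (by rw [pd_comm_s14]; exact h m) hwj hi
      rw [if_pos hwj]
      rcases (by omega : (j ≠ 0 ∧ i = j - 1) ∨ i = j ∨ i = j + 1) with ⟨hj0, rfl⟩ | rfl | rfl
      · rw [if_neg hj0, if_pos hi]; exact le_add_right (le_add_right le_rfl)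
      · rw [if_pos hi]; exact le_add_right (le_add_left le_rfl)
      · rw [if_pos hi]; exact le_add_left le_rfl
    · rw [if_neg hwj]; exact bot_le
  calc annulusSum p L a w j ≤ _ := ENNReal.tsum_le_tsum hterm
    _ = _ := by
      rw [ENNReal.tsum_add, ENNReal.tsum_add]
      split_ifs <;> simp [annulusSum]

lemma tsum_pow_mul_rpow_le_of_le_adjacent {b : ℝ≥0∞} (hb0 : b ≠ 0) (hb1 : b ≤ 1) {α : ℝ}
    (hα : 0 < α) {S T : ℕ → ℝ≥0∞}
    (hT : ∀ j, T j ≤ (if j = 0 then 0 else S (j - 1)) + S j + S (j + 1)) :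
    ∑' j, b ^ j * T j ^ α ≤
      ENNReal.ofReal (max 1 ((3:ℝ) ^ (α - 1))) * (2 + b⁻¹) * ∑' j, b ^ j * S j ^ α := by
  set N := ∑' j, b ^ j * S j ^ α
  have hprev : ∑' j, b ^ j * (if j = 0 then 0 else S (j - 1)) ^ α ≤ N := by
    rw [tsum_eq_zero_add' ENNReal.summable]
    simp only [if_pos, Nat.add_one_ne_zero, if_false, Nat.add_sub_cancel,
      ENNReal.zero_rpow_of_pos hα, mul_zero, zero_add]
    exact ENNReal.tsum_le_tsum fun k =>
      mul_le_mul_left (pow_le_pow_right_of_le_one' hb1 k.le_succ) _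
  have hnext : ∑' j, b ^ j * S (j + 1) ^ α ≤ b⁻¹ * N := by
    calc ∑' j, b ^ j * S (j + 1) ^ α = b⁻¹ * ∑' j, b ^ (j + 1) * S (j + 1) ^ α := by
          rw [← ENNReal.tsum_mul_left]
          refine tsum_congr fun j => ?_
          rw [pow_succ', mul_assoc b, ← mul_assoc b⁻¹,
            ENNReal.inv_mul_cancel hb0 (ne_top_of_le_ne_top ENNReal.one_ne_top hb1), one_mul]
      _ ≤ b⁻¹ * N := by
          gcongr
          exact ENNReal.tsum_comp_le_tsum_of_injective (add_left_injective 1)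
            (fun j => b ^ j * S j ^ α)
  set C := ENNReal.ofReal (max 1 ((3:ℝ) ^ (α - 1)))
  calc ∑' j, b ^ j * T j ^ α
      ≤ ∑' j, C * (b ^ j * (if j = 0 then 0 else S (j - 1)) ^ α
          + b ^ j * S j ^ α + b ^ j * S (j + 1) ^ α) := by
        refine ENNReal.tsum_le_tsum fun j => ?_
        calc b ^ j * T j ^ α ≤ b ^ j * (C * _) := by
              gcongr
              exact (ENNReal.rpow_le_rpow (hT j) hα.le).trans (add_add_rpow_le hα.le _ _ _)
          _ = _ := by ring
    _ = C * (∑' j, b ^ j * (if j = 0 then 0 else S (j - 1)) ^ α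
          + N + ∑' j, b ^ j * S (j + 1) ^ α) := by
        rw [ENNReal.tsum_mul_left, ENNReal.tsum_add, ENNReal.tsum_add]
    _ ≤ C * (N + N + b⁻¹ * N) := by gcongr
    _ = C * (2 + b⁻¹) * N := by ring

theorem stmt14_general (p q : ℝ) (hp : 0 < p) (hq : 0 < q) (L : ℕ) (hL : 2 ≤ L)
    (zs zs' : ℕ → ℂ)
    (hz : ∀ m, zs m ∈ Metric.ball (0:ℂ) 1) (hz' : ∀ m, zs' m ∈ Metric.ball (0:ℂ) 1)
    (δ : ℝ) (hδ : δ < 1/20)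
    (hpert : ∀ m, pd (zs m) (zs' m) < δ)
    (a : ℕ → ℂ) :
    lnorm p q L a zs' ≤
      ENNReal.ofReal (3 * ((1:ℝ)/L) ^ (-(1 + q/p)) * max 1 ((3:ℝ) ^ (q/p - 1))) *
        lnorm p q L a zs := by
  have hL' : (2:ℝ) ≤ L := by exact_mod_cast hL
  have hβ : (0:ℝ) < 1 / L := one_div_pos.mpr (by linarith)
  set b := ENNReal.ofReal (1 / L) ^ (1 + q / p)
  have hb0 : b ≠ 0 := (ENNReal.rpow_pos (ENNReal.ofReal_pos.mpr hβ) ENNReal.ofReal_ne_top).ne'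
  have hb1 : b ≤ 1 := ENNReal.rpow_le_one
    (ENNReal.ofReal_le_one.mpr (div_le_one_of_le₀ (by linarith) (by linarith))) (by positivity)
  have hconst : 2 + b⁻¹ ≤ ENNReal.ofReal (3 * ((1:ℝ)/L) ^ (-(1 + q/p))) := by
    rw [ENNReal.ofReal_mul (by norm_num), ← ENNReal.ofReal_rpow_of_pos hβ, ENNReal.rpow_neg]
    calc 2 + b⁻¹ ≤ 2 * b⁻¹ + b⁻¹ := by
          gcongr; exact le_mul_of_one_le_right' (ENNReal.one_le_inv.mpr hb1)
      _ = _ := by rw [ENNReal.ofReal_ofNat]; ring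
  rw [lnorm_eq_tsum_pow_mul, lnorm_eq_tsum_pow_mul, ENNReal.ofReal_mul (by positivity),
    mul_comm _ (ENNReal.ofReal (max _ _))]
  calc _ ≤ _ := tsum_pow_mul_rpow_le_of_le_adjacent hb0 hb1 (div_pos hq hp)
          (annulusSum_le_adjacent p hL a (fun m => mem_ball_zero_iff.mp (hz m))
            (fun m => mem_ball_zero_iff.mp (hz' m)) (by linarith) hpert)
    _ ≤ _ := by gcongr

theorem stmt14 (p q : ℝ) (hp : 0 < p) (hq : 0 < q) (L : ℕ) (hL : 2 ≤ L)
    (zs zs' : ℕ → ℂ)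
    (hz : ∀ m, zs m ∈ Metric.ball (0:ℂ) 1) (hz' : ∀ m, zs' m ∈ Metric.ball (0:ℂ) 1)
    -- no limit points in the disc
    (hnl : ∀ z ∈ Metric.ball (0:ℂ) 1, ¬ MapClusterPt z Filter.atTop zs)
    (hnl' : ∀ z ∈ Metric.ball (0:ℂ) 1, ¬ MapClusterPt z Filter.atTop zs')
    (δ : ℝ) (hδ0 : 0 < δ) (hδ : δ < 1/20)
    (hpert : ∀ m, pd (zs m) (zs' m) < δ)
    (a : ℕ → ℂ) :
    lnorm p q L a zs' ≤
      ENNReal.ofReal (3 * ((1:ℝ)/L) ^ (-(1 + q/p)) * max 1 ((3:ℝ) ^ (q/p - 1))) *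
        lnorm p q L a zs :=
  stmt14_general p q hp hq L hL zs zs' hz hz' δ hδ hpert a
end
end
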